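/- Unconditional Bellman-type recursion for the Expected Divergence Point: for every state s, EDP(s) = [1 - Σ_{a ∈ A'(s)} π2(s,a)] + Σ_{a ∈ A'(s)} π2(s,a) · Σ_{s' ∈ S} T(s,a,s') · (D(s') + EDP(s')), where D(s') = Σ_{n=1}^∞ p_n(s') is the total divergence probability from s', and all quantities are computed in the extended nonnegative reals ℝ≥0∞. -/
import Mathlib


open scoped ENNReal Classical BigOperators

/-- The divergence probability `pdiv π1 π2 T n s`: the probability that a trajectory
sampled from `π2` (with transitions `T`), starting at state `s`, first takes an action
assigned zero probability by `π1` exactly at timestep `n` (`n ≥ 1`; `pdiv 0` is set to `0`).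
It is the sum over all sequences `a_1, s_1, …, s_{n-1}, a_n` (with `s_0 = s`,
`a_k ∈ A'(s_{k-1}) = {a | π1 s_{k-1} a ≠ 0}` for `k < n`, and `a_n ∉ A'(s_{n-1})`) of
`π2(s_0,a_1)·T(s_0,a_1,s_1)·… ·T(s_{n-2},a_{n-1},s_{n-1})·π2(s_{n-1},a_n)`. -/
noncomputable def pdiv {S A : Type*} [Fintype S] [Fintype A]
    (π1 π2 : S → A → ℝ≥0∞) (T : S → A → S → ℝ≥0∞) : ℕ → S → ℝ≥0∞
  | 0, _ => 0
  | n + 1, s =>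
      ∑ a : Fin (n + 1) → A, ∑ σ : Fin n → S,
        (∏ k : Fin n,
            if π1 ((Fin.cons s σ : Fin (n + 1) → S) k.castSucc) (a k.castSucc) ≠ 0 then
              π2 ((Fin.cons s σ : Fin (n + 1) → S) k.castSucc) (a k.castSucc) *
                T ((Fin.cons s σ : Fin (n + 1) → S) k.castSucc) (a k.castSucc)
                  ((Fin.cons s σ : Fin (n + 1) → S) k.succ)
            else 0) *
          (if π1 ((Fin.cons s σ : Fin (n + 1) → S) (Fin.last n)) (a (Fin.last n)) = 0 then
              π2 ((Fin.cons s σ : Fin (n + 1) → S) (Fin.last n)) (a (Fin.last n))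
            else 0)

/-- The survival probability `surv π1 π2 T N s`: the probability that the first `N` actions
sampled from `π2` (with transitions `T`), starting at state `s`, are all `π1`-consistent.
It is the sum over all sequences `a_1, s_1, …, a_N, s_N` (with `s_0 = s` and
`a_k ∈ A'(s_{k-1}) = {a | π1 s_{k-1} a ≠ 0}` for all `1 ≤ k ≤ N`) of
`π2(s_0,a_1)·T(s_0,a_1,s_1)·… ·π2(s_{N-1},a_N)·T(s_{N-1},a_N,s_N)`. -/
noncomputable def surv {S A : Type*} [Fintype S] [Fintype A]
    (π1 π2 : S → A → ℝ≥0∞) (T : S → A → S → ℝ≥0∞) (N : ℕ) (s : S) : ℝ≥0∞ :=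
  ∑ a : Fin N → A, ∑ σ : Fin N → S,
    ∏ k : Fin N,
      if π1 ((Fin.cons s σ : Fin (N + 1) → S) k.castSucc) (a k) ≠ 0 then
        π2 ((Fin.cons s σ : Fin (N + 1) → S) k.castSucc) (a k) *
          T ((Fin.cons s σ : Fin (N + 1) → S) k.castSucc) (a k)
            ((Fin.cons s σ : Fin (N + 1) → S) k.succ)
      else 0

/-- The Expected Divergence Point `EDP(s, π1 | π2) = Σ_{n=1}^∞ n · p_n(s)`,
valued in `ℝ≥0∞`. -/
noncomputable def EDP {S A : Type*} [Fintype S] [Fintype A]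
    (π1 π2 : S → A → ℝ≥0∞) (T : S → A → S → ℝ≥0∞) (s : S) : ℝ≥0∞ :=
  ∑' n : ℕ, ((n + 1 : ℕ) : ℝ≥0∞) * pdiv π1 π2 T (n + 1) s

section Aux
variable {S A : Type*} [Fintype S] [Fintype A] (π1 π2 : S → A → ℝ≥0∞) (T : S → A → S → ℝ≥0∞)

lemma pdiv_one (s : S) : pdiv π1 π2 T 1 s = ∑ a : A, if π1 s a = 0 then π2 s a else 0 := by
  rw [show (1 : ℕ) = 0 + 1 from rfl]
  simp only [pdiv]
  rw [← (Equiv.funUnique (Fin 1) A).symm.sum_comp]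
  simp

lemma sum_fun_cons {X M : Type*} [Fintype X] [AddCommMonoid M] (n : ℕ)
    (f : (Fin (n + 1) → X) → M) :
    ∑ x : Fin (n + 1) → X, f x = ∑ x0 : X, ∑ x' : Fin n → X, f (Fin.cons x0 x') := by
  rw [← (Fin.consEquiv (fun _ : Fin (n+1) => X)).sum_comp, Fintype.sum_prod_type]; rfl

lemma pdiv_succ (n : ℕ) (s : S) :
    pdiv π1 π2 T (n + 2) s = ∑ a : A, ∑ s' : S,
      (if π1 s a ≠ 0 then π2 s a * T s a s' else 0) * pdiv π1 π2 T (n + 1) s' := by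
  rw [show n + 2 = (n + 1) + 1 from rfl]
  conv_lhs => rw [pdiv]
  rw [sum_fun_cons]
  refine Finset.sum_congr rfl (fun a0 _ => ?_)
  rw [Finset.sum_comm, sum_fun_cons]
  refine Finset.sum_congr rfl (fun s1 _ => ?_)
  rw [Finset.sum_comm]
  conv_rhs => rw [pdiv]
  rw [Finset.mul_sum]
  refine Finset.sum_congr rfl (fun a' _ => ?_)
  rw [Finset.mul_sum]
  refine Finset.sum_congr rfl (fun σ' _ => ?_)
  rw [Fin.prod_univ_succ]
  simp only [Fin.castSucc_zero, Fin.cons_zero, Fin.cons_succ, ← Fin.succ_castSucc,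
    ← Fin.succ_last]
  ring

end Aux

/-- **Unconditional Bellman-type recursion for the Expected Divergence Point.**
For every state `s`:
`EDP(s) = [1 - Σ_{a ∈ A'(s)} π2(s,a)] + Σ_{a ∈ A'(s)} π2(s,a) · Σ_{s'} T(s,a,s') · (D(s') + EDP(s'))`,
where `D(s') = Σ_{n=1}^∞ p_n(s')` is the total divergence probability from `s'`,
`A'(s) = {a | π1(s,a) ≠ 0}`, and all quantities live in `ℝ≥0∞`. -/
theorem edp_bellman_update_unconditional {S A : Type*} [Fintype S] [Fintype A]
    [Nonempty S] [Nonempty A]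
    (π1 π2 : S → A → ℝ≥0∞) (T : S → A → S → ℝ≥0∞)
    (hπ1 : ∀ s, ∑ a : A, π1 s a = 1) (hπ2 : ∀ s, ∑ a : A, π2 s a = 1)
    (hT : ∀ s a, ∑ s' : S, T s a s' = 1) (s : S) :
    EDP π1 π2 T s =
      (1 - ∑ a ∈ Finset.univ.filter (fun a => π1 s a ≠ 0), π2 s a) +
        ∑ a ∈ Finset.univ.filter (fun a => π1 s a ≠ 0),
          π2 s a * ∑ s' : S, T s a s' *
            ((∑' n : ℕ, pdiv π1 π2 T (n + 1) s') + EDP π1 π2 T s') := by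
  have hle : ∑ a ∈ Finset.univ.filter (fun a => π1 s a ≠ 0), π2 s a ≤ 1 := by
    rw [← hπ2 s]
    exact Finset.sum_le_sum_of_subset (Finset.filter_subset _ _)
  have hfin : ∑ a ∈ Finset.univ.filter (fun a => π1 s a ≠ 0), π2 s a ≠ ⊤ :=
    ne_top_of_le_ne_top ENNReal.one_ne_top hle
  have hfirst : pdiv π1 π2 T 1 s
      = 1 - ∑ a ∈ Finset.univ.filter (fun a => π1 s a ≠ 0), π2 s a := by
    rw [pdiv_one]
    refine ENNReal.eq_sub_of_add_eq hfin ?_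
    have h2 := hπ2 s
    rw [← Finset.sum_filter_add_sum_filter_not Finset.univ (fun a => π1 s a ≠ 0) (π2 s)] at h2
    rw [← Finset.sum_filter, add_comm]
    simpa [not_not] using h2
  have htail : ∀ s' : S,
      (∑' n : ℕ, ((n + 1 + 1 : ℕ) : ℝ≥0∞) * pdiv π1 π2 T (n + 1) s')
        = (∑' n : ℕ, pdiv π1 π2 T (n + 1) s') + EDP π1 π2 T s' := by
    intro s'
    rw [EDP, ← ENNReal.tsum_add]
    refine tsum_congr (fun n => ?_)
    push_cast
    ring
  rw [EDP, tsum_eq_zero_add' ENNReal.summable]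
  congr 1
  · simpa using hfirst
  -- tail
  calc ∑' n : ℕ, ((n + 1 + 1 : ℕ) : ℝ≥0∞) * pdiv π1 π2 T (n + 1 + 1) s
      = ∑' n : ℕ, ∑ a : A, ∑ s' : S,
          (if π1 s a ≠ 0 then π2 s a * T s a s' else 0) *
            (((n + 1 + 1 : ℕ) : ℝ≥0∞) * pdiv π1 π2 T (n + 1) s') := by
        refine tsum_congr (fun n => ?_)
        rw [pdiv_succ, Finset.mul_sum]
        refine Finset.sum_congr rfl (fun a _ => ?_)
        rw [Finset.mul_sum]
        exact Finset.sum_congr rfl (fun s' _ => by ring)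
    _ = ∑ a : A, ∑ s' : S,
          (if π1 s a ≠ 0 then π2 s a * T s a s' else 0) *
            ∑' n : ℕ, ((n + 1 + 1 : ℕ) : ℝ≥0∞) * pdiv π1 π2 T (n + 1) s' := by
        rw [Summable.tsum_finsetSum (fun _ _ => ENNReal.summable)]
        refine Finset.sum_congr rfl (fun a _ => ?_)
        rw [Summable.tsum_finsetSum (fun _ _ => ENNReal.summable)]
        exact Finset.sum_congr rfl (fun s' _ => ENNReal.tsum_mul_left)
    _ = ∑ a ∈ Finset.univ.filter (fun a => π1 s a ≠ 0),
          π2 s a * ∑ s' : S, T s a s' *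
            ((∑' n : ℕ, pdiv π1 π2 T (n + 1) s') + EDP π1 π2 T s') := by
        rw [Finset.sum_filter]
        refine Finset.sum_congr rfl (fun a _ => ?_)
        by_cases h : π1 s a ≠ 0
        · rw [if_pos h, Finset.mul_sum]
          refine Finset.sum_congr rfl (fun s' _ => ?_)
          rw [if_pos h, htail s']
          ring
        · rw [if_neg h]
          simp [h]
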